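/- arXiv:0906.2388 — 2 statements merged into one kernel-verified Lean document; each statement's English description precedes it below -/
import Mathlib

section
/- Let P be a generic convex polygon with n ≥ 5 vertices and let E(P) be its evolute. Then the number N of locally extremal vertices of P satisfies N = 2·wind(P) − 2·wind(E(P)), where wind denotes the discrete winding number. -/
open EuclideanGeometry
open scoped Classical

noncomputable section

/-- The Euclidean plane. -/
abbrev Pt := EuclideanSpace ℝ (Fin 2)

/-- Signed area determinant of the triangle `a b c` (positive iff `a b c` is
counterclockwise, i.e. `c` lies strictly to the left of the directed line `a → b`). -/
def det2 (a b c : Pt) : ℝ :=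
  (b 0 - a 0) * (c 1 - a 1) - (b 1 - a 1) * (c 0 - a 0)

/-- The vertices `V 0, V 1, …, V (n-1)` (indices mod `n`) are distinct and in convex
position, listed counterclockwise: every other vertex lies strictly to the left of
each directed edge. -/
def ConvexCCW {n : ℕ} (V : ZMod n → Pt) : Prop :=
  Function.Injective V ∧
    ∀ i j : ZMod n, j ≠ i → j ≠ i + 1 → 0 < det2 (V i) (V (i + 1)) (V j)

/-- The polygon is generic: no three vertices are collinear and no four vertices lie
on a common circle. -/
def GenericPoly {n : ℕ} (V : ZMod n → Pt) : Prop :=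
  (∀ i j k : ZMod n, i ≠ j → j ≠ k → i ≠ k →
      ¬ Collinear ℝ ({V i, V j, V k} : Set Pt)) ∧
  (∀ i j k l : ZMod n, i ≠ j → i ≠ k → i ≠ l → j ≠ k → j ≠ l → k ≠ l →
      ¬ ∃ (O : Pt) (R : ℝ),
        dist (V i) O = R ∧ dist (V j) O = R ∧ dist (V k) O = R ∧ dist (V l) O = R)

/-- `O i` is the center and `R i` the radius of the circle `C i` through
`V (i-1)`, `V i`, `V (i+1)`. -/
def IsCircumData {n : ℕ} (V O : ZMod n → Pt) (R : ZMod n → ℝ) : Prop :=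
  ∀ i : ZMod n,
    dist (V (i - 1)) (O i) = R i ∧ dist (V i) (O i) = R i ∧
      dist (V (i + 1)) (O i) = R i

/-- The polygon is coherent: each circumcenter `O i` lies in the closed infinite cone
with apex `V i` spanned by the rays from `V i` through `V (i-1)` and `V (i+1)`. -/
def Coherent {n : ℕ} (V O : ZMod n → Pt) : Prop :=
  ∀ i : ZMod n, ∃ s t : ℝ, 0 ≤ s ∧ 0 ≤ t ∧
    O i - V i = s • (V (i - 1) - V i) + t • (V (i + 1) - V i)

/-- `V i` is locally maximal-extremal: `V (i-2)` and `V (i+2)` lie strictly outside `C i`. -/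
def LocMax {n : ℕ} (V O : ZMod n → Pt) (R : ZMod n → ℝ) (i : ZMod n) : Prop :=
  R i < dist (V (i - 2)) (O i) ∧ R i < dist (V (i + 2)) (O i)

/-- `V i` is locally minimal-extremal: `V (i-2)` and `V (i+2)` lie strictly inside `C i`. -/
def LocMin {n : ℕ} (V O : ZMod n → Pt) (R : ZMod n → ℝ) (i : ZMod n) : Prop :=
  dist (V (i - 2)) (O i) < R i ∧ dist (V (i + 2)) (O i) < R i

/-- `V i` is globally maximal-extremal: the open disk bounded by `C i` contains no vertex. -/
def GlobMax {n : ℕ} (V O : ZMod n → Pt) (R : ZMod n → ℝ) (i : ZMod n) : Prop :=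
  ∀ j : ZMod n, R i ≤ dist (V j) (O i)

/-- `V i` is globally minimal-extremal: the open disk bounded by `C i` contains every
vertex other than `V (i-1)`, `V i`, `V (i+1)`. -/
def GlobMin {n : ℕ} (V O : ZMod n → Pt) (R : ZMod n → ℝ) (i : ZMod n) : Prop :=
  ∀ j : ZMod n, j ≠ i - 1 → j ≠ i → j ≠ i + 1 → dist (V j) (O i) < R i

/-- `V i` is radially maximal-extremal: `R (i-1) < R i > R (i+1)`. -/
def RadMax {n : ℕ} (R : ZMod n → ℝ) (i : ZMod n) : Prop :=
  R (i - 1) < R i ∧ R (i + 1) < R i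

/-- `V i` is radially minimal-extremal: `R (i-1) > R i < R (i+1)`. -/
def RadMin {n : ℕ} (R : ZMod n → ℝ) (i : ZMod n) : Prop :=
  R i < R (i - 1) ∧ R i < R (i + 1)

end

noncomputable section

/-- The angle of a closed polygon at the middle vertex `b` (coming from `a`, leaving
towards `c`), measured on the left-hand side with respect to the direction of
traversal; it equals the unsigned angle `∠ a b c` when the traversal turns left at `b`
and `2π - ∠ a b c` when it turns right. -/
def leftAngle (a b c : Pt) : ℝ :=
  if 0 < det2 a b c then EuclideanGeometry.angle a b c
  else 2 * Real.pi - EuclideanGeometry.angle a b c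

/-- The discrete winding number of the closed polygon with vertex sequence `W`:
`wind(W) = (1/2π) ∑ᵢ (π - ∠Wᵢ)`. -/
def wind {n : ℕ} [NeZero n] (W : ZMod n → Pt) : ℝ :=
  (1 / (2 * Real.pi)) *
    ∑ i : ZMod n, (Real.pi - leftAngle (W (i - 1)) (W i) (W (i + 1)))

end


/-!
Consecutive circumcircles `C i` and `C (i + 1)` share the chord `V i V (i + 1)`, so their
centres differ by a multiple of the rotated edge:
`O (i + 1) - O i = μ i • perp (V (i + 1) - V i)`.
The difference of the powers of a point `X` with respect to these two circles is
`2 μ i det2 (V i) (V (i + 1)) X`, so the sign of `μ i` decides whether `V (i + 2)` lies outside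
`C i` and whether `V (i - 1)` lies inside `C (i + 1)`. Genericity gives `μ i ≠ 0`, and `V i` is
locally extremal exactly when `μ (i - 1)` and `μ i` have opposite signs. Since the edges of the
evolute are the rotated edges of `P` scaled by `μ`, the evolute turns at `O i` by the same angle
as `P` at `V i`, except that it turns by `π` less where `μ` changes sign. Summing the turning
angles gives `2π wind P - 2π wind E(P) = π N`.
-/

open scoped RealInnerProductSpace ComplexConjugate
open Real Complex

noncomputable def toComplex : Pt ≃ₗᵢ[ℝ] ℂ := Complex.orthonormalBasisOneI.repr.symm

@[simp]
lemma toComplex_apply (x : Pt) : toComplex x = x 0 + x 1 * I := rfl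

def perp (v : Pt) : Pt := !₂[-v 1, v 0]

@[simp]
lemma perp_apply_zero (v : Pt) : perp v 0 = -v 1 := rfl

@[simp]
lemma perp_apply_one (v : Pt) : perp v 1 = v 0 := rfl

lemma toComplex_perp (v : Pt) : toComplex (perp v) = I * toComplex v := by
  apply Complex.ext <;> simp

lemma det2_rotate (a b c : Pt) : det2 b c a = det2 a b c := by
  unfold det2; ring

lemma det2_self_left (a c : Pt) : det2 a a c = 0 := by
  simp [det2]

lemma inner_eq_coords (u w : Pt) : ⟪u, w⟫ = u 0 * w 0 + u 1 * w 1 := by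
  simp [PiLp.inner_apply, Fin.sum_univ_two]; ring

lemma inner_sub_perp_sub (A B X : Pt) : ⟪X - A, perp (B - A)⟫ = det2 A B X := by
  rw [inner_eq_coords]; simp only [det2, perp_apply_zero, perp_apply_one, PiLp.sub_apply]; ring

lemma re_conj_toComplex_mul (u w : Pt) : (conj (toComplex u) * toComplex w).re = ⟪u, w⟫ := by
  rw [← LinearIsometryEquiv.inner_map_map toComplex, Complex.inner, mul_comm]

lemma im_conj_toComplex_mul (a b c : Pt) :
    (conj (toComplex (b - a)) * toComplex (c - b)).im = det2 a b c := by
  simp [det2]; ring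

lemma conj_toComplex_smul_perp_mul (r s : ℝ) (u w : Pt) :
    conj (toComplex (r • perp u)) * toComplex (s • perp w)
      = (r * s : ℝ) * (conj (toComplex u) * toComplex w) := by
  simp only [map_smul, toComplex_perp, Complex.real_smul, map_mul, Complex.conj_ofReal,
    Complex.conj_I, Complex.ofReal_mul]
  linear_combination (-(r * s * conj (toComplex u) * toComplex w)) * Complex.I_sq

lemma exists_eq_smul_perp_of_inner_eq_zero {u w : Pt} (hw : w ≠ 0) (h : ⟪u, w⟫ = 0) :
    ∃ μ : ℝ, u = μ • perp w := by
  have hw' : w 0 ^ 2 + w 1 ^ 2 ≠ 0 := by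
    rwa [sq, sq, ← inner_eq_coords, ne_eq, inner_self_eq_zero]
  rw [inner_eq_coords] at h
  refine ⟨(w 0 * u 1 - w 1 * u 0) / (w 0 ^ 2 + w 1 ^ 2), ?_⟩
  ext j
  fin_cases j
  · simp only [Fin.zero_eta, PiLp.smul_apply, perp_apply_zero, smul_eq_mul]
    field_simp
    linear_combination w 0 * h
  · simp only [Fin.mk_one, PiLp.smul_apply, perp_apply_one, smul_eq_mul]
    field_simp
    linear_combination w 1 * h

lemma dist_sq_sub_dist_sq_sub_dist_sq_add_dist_sq {E : Type*} [NormedAddCommGroup E]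
    [InnerProductSpace ℝ E] (X A O O' : E) :
    dist X O ^ 2 - dist A O ^ 2 - dist X O' ^ 2 + dist A O' ^ 2 = 2 * ⟪X - A, O' - O⟫ := by
  simp only [dist_eq_norm, ← real_inner_self_eq_norm_sq]
  simp only [inner_sub_left, inner_sub_right, real_inner_comm]
  ring

lemma Complex.arg_ofReal_mul_of_im_pos {r : ℝ} (hr : r ≠ 0) {z : ℂ} (hz : 0 < z.im) :
    arg (r * z) = if r < 0 then arg z - π else arg z := by
  rcases hr.lt_or_gt with hneg | hpos
  · rw [if_pos hneg, show (r : ℂ) * z = ((-r : ℝ) : ℂ) * -z by push_cast; ring,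
      arg_real_mul _ (neg_pos.2 hneg), arg_neg_eq_arg_sub_pi_of_im_pos hz]
  · rw [if_neg hpos.not_gt, arg_real_mul _ hpos]

lemma pi_sub_leftAngle_eq_arg {a b c : Pt} (h : det2 a b c ≠ 0) :
    π - leftAngle a b c = arg (conj (toComplex (b - a)) * toComplex (c - b)) := by
  set z := conj (toComplex (b - a)) * toComplex (c - b)
  have him : z.im = det2 a b c := im_conj_toComplex_mul a b c
  have hangle : angle a b c = π - arccos (z.re / ‖z‖) := by
    rw [EuclideanGeometry.angle, vsub_eq_sub, vsub_eq_sub, ← neg_sub b a,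
      InnerProductGeometry.angle_neg_left, re_conj_toComplex_mul, norm_mul, Complex.norm_conj,
      LinearIsometryEquiv.norm_map, LinearIsometryEquiv.norm_map]
    rfl
  rcases h.lt_or_gt with hneg | hpos
  · rw [leftAngle, if_neg (by linarith), hangle, arg_of_im_neg (him ▸ hneg)]
    ring
  · rw [leftAngle, if_pos hpos, hangle, arg_of_im_pos (him ▸ hpos)]
    ring

noncomputable def turn {n : ℕ} (W : ZMod n → Pt) (i : ZMod n) : ℝ :=
  π - leftAngle (W (i - 1)) (W i) (W (i + 1))

lemma two_mul_wind_sub_two_mul_wind {n : ℕ} [NeZero n] (W W' : ZMod n → Pt)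
    (p : ZMod n → Prop) [DecidablePred p]
    (h : ∀ i, turn W i - turn W' i = if p i then π else 0) :
    2 * wind W - 2 * wind W' = {i | p i}.ncard := by
  have hsum : ∑ i, turn W i - ∑ i, turn W' i = {i | p i}.ncard * π := by
    rw [← Finset.sum_sub_distrib, Finset.sum_congr rfl fun i _ => h i, Finset.sum_ite,
      Finset.sum_const, Finset.sum_const_zero, nsmul_eq_mul, add_zero,
      Set.ncard_eq_toFinset_card', Set.toFinset_ofPred]
  change 2 * (1 / (2 * π) * ∑ i, turn W i) - 2 * (1 / (2 * π) * ∑ i, turn W' i) = _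
  field_simp
  linear_combination hsum

lemma ZMod.add_natCast_ne_add_natCast {n a b : ℕ} (j : ZMod n) (hab : a < b) (hbn : b < n) :
    j + a ≠ j + b := by
  rw [ne_eq, add_right_inj, ZMod.natCast_eq_natCast_iff', Nat.mod_eq_of_lt (hab.trans hbn),
    Nat.mod_eq_of_lt hbn]
  exact hab.ne

lemma lt_iff_pos_of_sq_sub_sq_eq_mul {r d m D : ℝ} (hr : 0 ≤ r) (hd : 0 ≤ d) (hD : 0 < D)
    (h : d ^ 2 - r ^ 2 = m * D) : r < d ↔ 0 < m := by
  rw [← sq_lt_sq₀ hr hd, ← sub_pos, h, mul_pos_iff_of_pos_right hD]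

lemma lt_iff_neg_of_sq_sub_sq_eq_mul {r d m D : ℝ} (hr : 0 ≤ r) (hd : 0 ≤ d) (hD : 0 < D)
    (h : d ^ 2 - r ^ 2 = m * D) : d < r ↔ m < 0 := by
  rw [← sq_lt_sq₀ hd hr, ← sub_neg, h]
  exact ⟨fun hm => neg_of_mul_neg_left hm hD.le, fun hm => mul_neg_of_neg_of_pos hm hD⟩

section Polygon

variable {n : ℕ} {V O : ZMod n → Pt} {R : ZMod n → ℝ} {μ : ZMod n → ℝ}

def EvoluteCoeffs (V O : ZMod n → Pt) (μ : ZMod n → ℝ) : Prop :=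
  ∀ i, O (i + 1) - O i = μ i • perp (V (i + 1) - V i)

lemma ConvexCCW.det2_pos (hconv : ConvexCCW V) (hn : 3 ≤ n) (i : ZMod n) :
    0 < det2 (V i) (V (i + 1)) (V (i + 2)) := by
  refine hconv.2 i (i + 2) ?_ ?_
  · simpa using (ZMod.add_natCast_ne_add_natCast i (a := 0) (b := 2) (by omega) hn).symm
  · simpa using (ZMod.add_natCast_ne_add_natCast i (a := 1) (b := 2) (by omega) hn).symm

lemma ConvexCCW.det2_sub_one_pos (hconv : ConvexCCW V) (hn : 3 ≤ n) (i : ZMod n) :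
    0 < det2 (V (i - 1)) (V i) (V (i + 1)) := by
  have h := hconv.det2_pos hn (i - 1)
  rwa [sub_add_cancel, show i - 1 + 2 = i + 1 by ring] at h

lemma ConvexCCW.add_one_ne (hconv : ConvexCCW V) (hn : 3 ≤ n) (i : ZMod n) : V (i + 1) ≠ V i :=
  fun h => (hconv.det2_pos hn i).ne' (by rw [h, det2_self_left])

lemma IsCircumData.exists_evoluteCoeffs (hcirc : IsCircumData V O R)
    (hedge : ∀ i, V (i + 1) ≠ V i) :
    ∃ μ, EvoluteCoeffs V O μ := by
  refine Classical.axiomOfChoice fun i => exists_eq_smul_perp_of_inner_eq_zero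
    (sub_ne_zero.2 (hedge i)) ?_
  have h := (hcirc (i + 1)).1
  rw [add_sub_cancel_right] at h
  exact inner_vsub_vsub_of_dist_eq_of_dist_eq ((hcirc i).2.1.trans (hcirc i).2.2.symm)
    (h.trans (hcirc (i + 1)).2.1.symm)

lemma IsCircumData.dist_add_two_sq_sub_sq (hcirc : IsCircumData V O R)
    (hμ : EvoluteCoeffs V O μ) (i : ZMod n) :
    dist (V (i + 2)) (O i) ^ 2 - R i ^ 2 = 2 * μ i * det2 (V i) (V (i + 1)) (V (i + 2)) := by
  have key := dist_sq_sub_dist_sq_sub_dist_sq_add_dist_sq (V (i + 2)) (V i) (O i) (O (i + 1))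
  have h1 := (hcirc (i + 1)).1
  have h2 := (hcirc (i + 1)).2.2
  rw [add_sub_cancel_right] at h1
  rw [add_assoc, one_add_one_eq_two] at h2
  rw [hμ i, inner_smul_right, inner_sub_perp_sub, (hcirc i).2.1, h1, h2] at key
  linear_combination key

lemma IsCircumData.dist_sub_two_sq_sub_sq (hcirc : IsCircumData V O R)
    (hμ : EvoluteCoeffs V O μ) (i : ZMod n) :
    dist (V (i - 2)) (O i) ^ 2 - R i ^ 2
      = -(2 * μ (i - 1) * det2 (V (i - 2)) (V (i - 1)) (V i)) := by
  have key :=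
    dist_sq_sub_dist_sq_sub_dist_sq_add_dist_sq (V (i - 2)) (V (i - 1)) (O (i - 1)) (O i)
  have h1 := (hcirc (i - 1)).1
  have h2 := (hcirc i).1
  rw [sub_sub, one_add_one_eq_two] at h1
  have hμ' := hμ (i - 1)
  rw [sub_add_cancel] at hμ'
  rw [hμ', inner_smul_right, inner_sub_perp_sub, det2_rotate, (hcirc (i - 1)).2.1, h1, h2] at key
  linear_combination -key

lemma GenericPoly.not_concyclic_four (hgen : GenericPoly V) (hn : 4 ≤ n) (j : ZMod n) :
    ¬ ∃ (O : Pt) (R : ℝ), dist (V j) O = R ∧ dist (V (j + 1)) O = R ∧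
      dist (V (j + 2)) O = R ∧ dist (V (j + 3)) O = R := by
  have hne {a b : ℕ} (hab : a < b) (hb : b ≤ 3) : j + a ≠ j + b :=
    ZMod.add_natCast_ne_add_natCast j hab (by omega)
  refine hgen.2 j (j + 1) (j + 2) (j + 3) ?_ ?_ ?_ ?_ ?_ ?_
  · simpa using hne (a := 0) (b := 1) (by omega) (by omega)
  · simpa using hne (a := 0) (b := 2) (by omega) (by omega)
  · simpa using hne (a := 0) (b := 3) (by omega) (by omega)
  · simpa using hne (a := 1) (b := 2) (by omega) (by omega)
  · simpa using hne (a := 1) (b := 3) (by omega) (by omega)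
  · simpa using hne (a := 2) (b := 3) (by omega) (by omega)

lemma GenericPoly.evolute_coeff_ne_zero (hgen : GenericPoly V) (hn : 4 ≤ n)
    (hcirc : IsCircumData V O R) (hμ : EvoluteCoeffs V O μ)
    (i : ZMod n) : μ i ≠ 0 := by
  intro h0
  have hpow := hcirc.dist_add_two_sq_sub_sq hμ i
  rw [h0, mul_zero, zero_mul, sub_eq_zero,
    sq_eq_sq₀ dist_nonneg ((hcirc i).2.1 ▸ dist_nonneg)] at hpow
  apply hgen.not_concyclic_four hn (i - 1)
  rw [sub_add_cancel, show i - 1 + 2 = i + 1 by ring, show i - 1 + 3 = i + 2 by ring]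
  exact ⟨O i, R i, (hcirc i).1, (hcirc i).2.1, (hcirc i).2.2, hpow⟩

lemma locMax_or_locMin_iff (hconv : ConvexCCW V) (hn : 3 ≤ n) (hcirc : IsCircumData V O R)
    (hμ : EvoluteCoeffs V O μ) (i : ZMod n) :
    LocMax V O R i ∨ LocMin V O R i ↔ μ (i - 1) * μ i < 0 := by
  have hR : 0 ≤ R i := (hcirc i).2.1 ▸ dist_nonneg
  have hnext := hcirc.dist_add_two_sq_sub_sq hμ i
  have hprev := hcirc.dist_sub_two_sq_sub_sq hμ i
  rw [← neg_mul] at hprev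
  have hD := hconv.det2_pos hn (i - 2)
  rw [show i - 2 + 1 = i - 1 by ring, show i - 2 + 2 = i by ring] at hD
  rw [LocMax, LocMin, mul_neg_iff,
    lt_iff_pos_of_sq_sub_sq_eq_mul hR dist_nonneg (hconv.det2_pos hn i) hnext,
    lt_iff_neg_of_sq_sub_sq_eq_mul hR dist_nonneg (hconv.det2_pos hn i) hnext,
    lt_iff_pos_of_sq_sub_sq_eq_mul hR dist_nonneg hD hprev,
    lt_iff_neg_of_sq_sub_sq_eq_mul hR dist_nonneg hD hprev]
  grind

lemma turn_sub_turn_evolute (hconv : ConvexCCW V) (hn : 3 ≤ n)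
    (hμ : EvoluteCoeffs V O μ) (hμ0 : ∀ i, μ i ≠ 0)
    (i : ZMod n) :
    turn V i - turn O i = if μ (i - 1) * μ i < 0 then π else 0 := by
  set z := conj (toComplex (V i - V (i - 1))) * toComplex (V (i + 1) - V i)
  have hz : 0 < z.im := by
    rw [im_conj_toComplex_mul]; exact hconv.det2_sub_one_pos hn i
  have hO : conj (toComplex (O i - O (i - 1))) * toComplex (O (i + 1) - O i)
      = (μ (i - 1) * μ i : ℝ) * z := by
    have h := hμ (i - 1)
    rw [sub_add_cancel] at h
    rw [h, hμ i, conj_toComplex_smul_perp_mul]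
  have hμμ : μ (i - 1) * μ i ≠ 0 := mul_ne_zero (hμ0 _) (hμ0 _)
  have hdetO : det2 (O (i - 1)) (O i) (O (i + 1)) ≠ 0 := by
    rw [← im_conj_toComplex_mul, hO, im_ofReal_mul]
    exact mul_ne_zero hμμ hz.ne'
  rw [turn, turn, pi_sub_leftAngle_eq_arg (hconv.det2_sub_one_pos hn i).ne',
    pi_sub_leftAngle_eq_arg hdetO, hO, Complex.arg_ofReal_mul_of_im_pos hμμ hz]
  split_ifs <;> ring

end Polygon

/-- For a generic convex polygon `P` with `n ≥ 5` vertices, the number `N` of locally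
extremal vertices satisfies `N = 2·wind(P) - 2·wind(E(P))`, where `E(P)` is the evolute
(the closed polygon of circumcenters `O`). -/
theorem extremal_count_eq_winding_difference
    (n : ℕ) [NeZero n] (hn : 5 ≤ n)
    (V O : ZMod n → Pt) (R : ZMod n → ℝ)
    (hconv : ConvexCCW V) (hgen : GenericPoly V) (hcirc : IsCircumData V O R) :
    ({i : ZMod n | LocMax V O R i ∨ LocMin V O R i}.ncard : ℝ) =
      2 * wind V - 2 * wind O := by
  obtain ⟨μ, hμ⟩ := hcirc.exists_evoluteCoeffs (hconv.add_one_ne (by omega))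
  have hμ0 : ∀ i, μ i ≠ 0 := hgen.evolute_coeff_ne_zero (by omega) hcirc hμ
  rw [Set.ext fun i => locMax_or_locMin_iff hconv (by omega) hcirc hμ i]
  exact (two_mul_wind_sub_two_mul_wind V O _ (turn_sub_turn_evolute hconv (by omega) hμ hμ0)).symm
end

section
/- Let P be a generic convex polygon with n ≥ 6 vertices and let P_1 and P_2 be the two polygons resulting from a decomposition of P whose cutting diagonal is Delaunay. Then s_-(P) ≥ s_-(P_1) + s_-(P_2) − 2. -/
open EuclideanGeometry
open scoped Classical

noncomputable section

/-- The sub-polygon of `V` cut off by the diagonal from `V a` to `V (a + m)`: its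
vertex sequence is `V a, V (a+1), …, V (a+m)` (so it has `m + 1` vertices and the
diagonal is one of its edges). -/
def subPolygon {n : ℕ} [NeZero n] (V : ZMod n → Pt) (a : ZMod n) (m : ℕ) :
    ZMod (m + 1) → Pt :=
  fun j => V (a + (j.val : ZMod n))

end

/-!
For two circles, the difference of the powers of a point with respect to them is an affine
function of the point; hence its values at four points `A, B, W, X` of the plane satisfy the
affine relation whose coefficients are the signed areas of the four triangles they span.

Let `AB` be the Delaunay diagonal and `D` an empty circle through `A` and `B`. An interior
vertex `W` of `P₁` that is globally maximal in `P₁` has the same circle `C` in `P`, and `A`, `B`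
are not inside `C`. For a vertex `X` of `P₂`, the quadrilateral `A W B X` is convex, and the
relation, together with `W` and `X` not being inside `D`, forces `X` not to be inside `C`. So the
interior globally maximal vertices of `P₁` and of `P₂` are distinct globally maximal vertices
of `P`.
The same relation shows that if both endpoints of the diagonal were globally maximal in `P₁`,
the circle of `A` would pass through the neighbour of `B` as well, and four vertices would be
concyclic. So each `Pᵢ` has at most one globally maximal vertex not accounted for in `P`.
-/

lemma det2_cyc (a b c : Pt) : det2 a b c = det2 b c a := by
  unfold det2; ring

lemma det2_swap (a b c : Pt) : det2 a b c = -det2 a c b := by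
  unfold det2; ring

lemma det2_grassmann_plucker (P A X Y Z : Pt) :
    det2 P A Y * det2 P X Z = det2 P A X * det2 P Y Z + det2 P A Z * det2 P X Y := by
  unfold det2; ring

noncomputable def circlePower (O : Pt) (R : ℝ) (x : Pt) : ℝ := dist x O ^ 2 - R ^ 2

lemma circlePower_eq_coords (O : Pt) (R : ℝ) (x : Pt) :
    circlePower O R x = (x 0 - O 0) ^ 2 + (x 1 - O 1) ^ 2 - R ^ 2 := by
  rw [circlePower, EuclideanSpace.dist_sq_eq, Fin.sum_univ_two, Real.dist_eq, Real.dist_eq,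
    sq_abs, sq_abs]

lemma circlePower_nonneg_iff {O x : Pt} {R : ℝ} (hR : 0 ≤ R) :
    0 ≤ circlePower O R x ↔ R ≤ dist x O := by
  rw [circlePower, sub_nonneg, sq_le_sq₀ hR dist_nonneg]

lemma circlePower_eq_zero_iff {O x : Pt} {R : ℝ} (hR : 0 ≤ R) :
    circlePower O R x = 0 ↔ dist x O = R := by
  rw [circlePower, sub_eq_zero, sq_eq_sq₀ dist_nonneg hR]

lemma det2_relation_circlePower_sub (A W B X O₁ O₂ : Pt) (R₁ R₂ : ℝ) :
    det2 A W B * (circlePower O₁ R₁ X - circlePower O₂ R₂ X)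
      + det2 A B X * (circlePower O₁ R₁ W - circlePower O₂ R₂ W) =
    det2 W B X * (circlePower O₁ R₁ A - circlePower O₂ R₂ A)
      + det2 A W X * (circlePower O₁ R₁ B - circlePower O₂ R₂ B) := by
  simp only [circlePower_eq_coords]
  unfold det2
  ring

/-- The four orientation hypotheses say that `A W B X` is a counterclockwise convex
quadrilateral. -/
lemma le_dist_of_delaunay_diagonal {A W B X Oc Od : Pt} {Rc Rd : ℝ}
    (hAWB : 0 < det2 A W B) (hWBX : 0 < det2 W B X) (hAWX : 0 < det2 A W X)
    (hABX : 0 < det2 A B X)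
    (hCW : dist W Oc = Rc) (hCA : Rc ≤ dist A Oc) (hCB : Rc ≤ dist B Oc)
    (hDA : dist A Od = Rd) (hDB : dist B Od = Rd) (hDW : Rd ≤ dist W Od)
    (hDX : Rd ≤ dist X Od) :
    Rc ≤ dist X Oc := by
  have hRc : 0 ≤ Rc := hCW ▸ dist_nonneg
  have hRd : 0 ≤ Rd := hDA ▸ dist_nonneg
  rw [← circlePower_nonneg_iff hRc] at hCA hCB ⊢
  rw [← circlePower_nonneg_iff hRd] at hDW hDX
  rw [← circlePower_eq_zero_iff hRc] at hCW
  rw [← circlePower_eq_zero_iff hRd] at hDA hDB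
  have hrel := det2_relation_circlePower_sub A W B X Oc Od Rc Rd
  rw [hDA, hDB, hCW] at hrel
  have hprod : 0 ≤ det2 A W B * (circlePower Oc Rc X - circlePower Od Rd X) := by
    nlinarith [mul_nonneg hWBX.le hCA, mul_nonneg hAWX.le hCB, mul_nonneg hABX.le hDW]
  linarith [(mul_nonneg_iff_of_pos_left hAWB).1 hprod]

/-- The circles `A B X` and `A B W`, with `W` and `X` on the same side of `A B`, coincide as soon
as neither contains the other one's third point in its open disk. -/
lemma dist_eq_of_same_side_of_le_dist {A B W X O₁ O₂ : Pt} {R₁ R₂ : ℝ}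
    (hside : 0 < det2 A B W * det2 A B X)
    (h₁A : dist A O₁ = R₁) (h₁B : dist B O₁ = R₁) (h₁X : dist X O₁ = R₁)
    (h₁W : R₁ ≤ dist W O₁)
    (h₂A : dist A O₂ = R₂) (h₂B : dist B O₂ = R₂) (h₂W : dist W O₂ = R₂)
    (h₂X : R₂ ≤ dist X O₂) :
    dist W O₁ = R₁ := by
  have hR₁ : 0 ≤ R₁ := h₁A ▸ dist_nonneg
  have hR₂ : 0 ≤ R₂ := h₂A ▸ dist_nonneg
  rw [← circlePower_nonneg_iff hR₁] at h₁W
  rw [← circlePower_nonneg_iff hR₂] at h₂X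
  rw [← circlePower_eq_zero_iff hR₁] at h₁A h₁B h₁X ⊢
  rw [← circlePower_eq_zero_iff hR₂] at h₂A h₂B h₂W
  have hrel := det2_relation_circlePower_sub A W B X O₁ O₂ R₁ R₂
  rw [h₁A, h₁B, h₁X, h₂A, h₂B, h₂W, det2_swap A W B] at hrel
  have hkey : det2 A B W * det2 A B X * circlePower O₁ R₁ W
      + det2 A B W * det2 A B W * circlePower O₂ R₂ X = 0 := by
    linear_combination det2 A B W * hrel
  by_contra hW
  have hWpos : 0 < circlePower O₁ R₁ W := lt_of_le_of_ne h₁W (Ne.symm hW)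
  linarith [mul_nonneg (mul_self_nonneg (det2 A B W)) h₂X, mul_pos hside hWpos]

lemma center_eq_and_radius_eq {x y z O O' : Pt} {R R' : ℝ}
    (hxy : x ≠ y) (hzx : z ≠ x) (hzy : z ≠ y)
    (hx : dist x O = R) (hy : dist y O = R) (hz : dist z O = R)
    (hx' : dist x O' = R') (hy' : dist y O' = R') (hz' : dist z O' = R') :
    O = O' ∧ R = R' := by
  obtain rfl : O = O' := by
    by_contra hO
    rcases eq_of_dist_eq_of_dist_eq_of_finrank_eq_two finrank_euclideanSpace_fin hO hxy
      hx hy hz hx' hy' hz' with h | h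
    exacts [hzx h, hzy h]
  exact ⟨rfl, hx.symm.trans hx'⟩

section Indices

variable {n : ℕ}

lemma add_natCast_eq_add_natCast_iff (p : ZMod n) {s t : ℕ} (hs : s < n) (ht : t < n) :
    p + (s : ZMod n) = p + t ↔ s = t := by
  rw [add_right_inj, ZMod.natCast_eq_natCast_iff', Nat.mod_eq_of_lt hs, Nat.mod_eq_of_lt ht]

lemma add_natCast_ne_self (p : ZMod n) {s : ℕ} (hs0 : 0 < s) (hs : s < n) :
    p + (s : ZMod n) ≠ p := by
  simpa using (add_natCast_eq_add_natCast_iff p hs (t := 0) (by omega)).not.2 hs0.ne'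

def openArc (c : ZMod n) (m : ℕ) : Set (ZMod n) := (fun t : ℕ => c + t) '' Set.Ioo 0 m

lemma disjoint_openArc (c : ZMod n) {m : ℕ} (hmn : m ≤ n) :
    Disjoint (openArc c m) (openArc (c + m) (n - m)) := by
  rw [Set.disjoint_left]
  rintro _ ⟨t, ht, rfl⟩ ⟨u, hu, heq⟩
  simp only [Set.mem_Ioo] at ht hu heq
  rw [add_assoc, ← Nat.cast_add, add_natCast_eq_add_natCast_iff c (by omega) (by omega)] at heq
  omega

end Indices

section Orientation

variable {n : ℕ} {V : ZMod n → Pt}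

lemma ConvexCCW.det2_pos_of_edge (hconv : ConvexCCW V) (p : ZMod n) {j : ℕ} (hj2 : 2 ≤ j)
    (hjn : j < n) : 0 < det2 (V p) (V (p + 1)) (V (p + j)) := by
  refine hconv.2 p _ (add_natCast_ne_self p (by omega) hjn) ?_
  simpa using (add_natCast_eq_add_natCast_iff p hjn (t := 1) (by omega)).not.2 (by omega)

lemma ConvexCCW.det2_pos_consecutive (hconv : ConvexCCW V) (p : ZMod n) {t : ℕ} (ht : 0 < t)
    (htn : t + 1 < n) : 0 < det2 (V p) (V (p + t)) (V (p + (t + 1 : ℕ))) := by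
  rw [det2_cyc, Nat.cast_succ, ← add_assoc]
  refine hconv.2 _ p (add_natCast_ne_self p ht (by omega)).symm ?_
  rw [add_assoc, ← Nat.cast_succ]
  exact (add_natCast_ne_self p (Nat.succ_pos t) htn).symm

lemma ConvexCCW.det2_pos_apex (hconv : ConvexCCW V) (p : ZMod n) {s t : ℕ} (hs : 0 < s)
    (hst : s < t) (htn : t < n) : 0 < det2 (V p) (V (p + s)) (V (p + t)) := by
  induction t generalizing s with
  | zero => omega
  | succ t ih =>
    obtain rfl | hst := (Nat.lt_succ_iff.1 hst).eq_or_lt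
    · exact hconv.det2_pos_consecutive p hs htn
    obtain rfl | hs1 := (show 1 ≤ s from hs).eq_or_lt
    · rw [Nat.cast_one]
      exact hconv.det2_pos_of_edge p (by omega) htn
    -- Grassmann–Plücker with `V (p + 1)`, whose triangles with `V p` are positive by convexity
    have hAY := hconv.det2_pos_of_edge p (j := t) (by omega) (by omega)
    have hAX := hconv.det2_pos_of_edge p (j := s) (by omega) (by omega)
    have hAZ := hconv.det2_pos_of_edge p (j := t + 1) (by omega) htn
    have hYZ := hconv.det2_pos_consecutive p (t := t) (by omega) htn
    have hXY := ih hs hst (by omega)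
    refine pos_of_mul_pos_right (a := det2 (V p) (V (p + 1)) (V (p + t))) ?_ hAY.le
    rw [det2_grassmann_plucker]
    exact add_pos (mul_pos hAX hYZ) (mul_pos hAZ hXY)

lemma ConvexCCW.det2_pos_s17 (hconv : ConvexCCW V) (p : ZMod n) {s t u : ℕ} (hst : s < t)
    (htu : t < u) (hun : u < n) : 0 < det2 (V (p + s)) (V (p + t)) (V (p + u)) := by
  have hshift : ∀ r : ℕ, s ≤ r → p + (r : ZMod n) = p + s + ((r - s : ℕ) : ZMod n) := by
    intro r hr
    push_cast [Nat.cast_sub hr]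
    ring
  rw [hshift t hst.le, hshift u (hst.trans htu).le]
  exact hconv.det2_pos_apex _ (by omega) (by omega) (by omega)

end Orientation

lemma Set.ncard_le_ncard_sdiff_pair_add_one {α : Type*} {s : Set α} {x y : α}
    (h : ¬ (x ∈ s ∧ y ∈ s)) : s.ncard ≤ (s \ {x, y}).ncard + 1 := by
  have hpair : (s ∩ {x, y}).ncard ≤ 1 := by
    refine (Set.ncard_le_one ((Set.toFinite {x, y}).inter_of_right s)).2 ?_
    rintro a ⟨ha, rfl | rfl⟩ b ⟨hb, rfl | rfl⟩ <;> tauto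
  calc s.ncard ≤ (s \ (s ∩ {x, y})).ncard + (s ∩ {x, y}).ncard :=
        Set.ncard_le_ncard_sdiff_add_ncard _ _ ((Set.toFinite {x, y}).inter_of_right s)
    _ ≤ (s \ {x, y}).ncard + 1 := by rw [Set.sdiff_self_inter]; omega

section SubPolygon

variable {n : ℕ} [NeZero n] {m : ℕ}

lemma subPolygon_natCast (V : ZMod n → Pt) (c : ZMod n) {t : ℕ} (ht : t ≤ m) :
    subPolygon V c m t = V (c + t) := by
  rw [subPolygon, ZMod.val_cast_of_lt (Nat.lt_succ_of_le ht)]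

lemma subPolygon_zero (V : ZMod n → Pt) (c : ZMod n) : subPolygon V c m 0 = V c := by
  simp [subPolygon]

variable {V O : ZMod n → Pt} {R : ZMod n → ℝ} {c : ZMod n} {O' : ZMod (m + 1) → Pt}
  {R' : ZMod (m + 1) → ℝ}

lemma IsCircumData.dist_natCast_subPolygon (hc' : IsCircumData (subPolygon V c m) O' R') {t : ℕ}
    (ht0 : 0 < t) (htm : t < m) :
    dist (V (c + (t - 1 : ℕ))) (O' t) = R' t ∧ dist (V (c + t)) (O' t) = R' t ∧
      dist (V (c + (t + 1 : ℕ))) (O' t) = R' t := by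
  obtain ⟨h₁, h₂, h₃⟩ := hc' t
  rw [← Nat.cast_pred ht0, subPolygon_natCast V c (by omega)] at h₁
  rw [subPolygon_natCast V c htm.le] at h₂
  rw [← Nat.cast_succ, subPolygon_natCast V c htm] at h₃
  exact ⟨h₁, h₂, h₃⟩

lemma IsCircumData.subPolygon_eq (hconv : ConvexCCW V) (hcirc : IsCircumData V O R)
    (hc' : IsCircumData (subPolygon V c m) O' R') (hmn : m < n) {t : ℕ} (ht0 : 0 < t)
    (htm : t < m) : O' t = O (c + t) ∧ R' t = R (c + t) := by
  obtain ⟨h₁, h₂, h₃⟩ := hc'.dist_natCast_subPolygon ht0 htm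
  obtain ⟨k₁, k₂, k₃⟩ := hcirc (c + t)
  rw [add_sub_assoc, ← Nat.cast_pred ht0] at k₁
  rw [add_assoc, ← Nat.cast_succ] at k₃
  have hne : ∀ {i j : ℕ}, i < n → j < n → i ≠ j → V (c + i) ≠ V (c + j) :=
    fun hi hj hij => hconv.1.ne ((add_natCast_eq_add_natCast_iff c hi hj).not.2 hij)
  exact center_eq_and_radius_eq (hne (by omega) (by omega) (by omega))
    (hne (by omega) (by omega) (by omega)) (hne (by omega) (by omega) (by omega))
    h₁ h₂ h₃ k₁ k₂ k₃

lemma GlobMax.of_subPolygon (hconv : ConvexCCW V) (hcirc : IsCircumData V O R)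
    (hc' : IsCircumData (subPolygon V c m) O' R') (hmn : m < n) {Od : Pt} {Rd : ℝ}
    (hdA : dist (V c) Od = Rd) (hdB : dist (V (c + m)) Od = Rd)
    (hempty : ∀ j : ZMod n, Rd ≤ dist (V j) Od) {t : ℕ} (ht0 : 0 < t) (htm : t < m)
    (hmax : GlobMax (subPolygon V c m) O' R' t) :
    GlobMax V O R (c + t) := by
  obtain ⟨hO, hR⟩ := hcirc.subPolygon_eq hconv hc' hmn ht0 htm
  intro j
  rw [← hO, ← hR]
  obtain ⟨u, hun, rfl⟩ : ∃ u < n, j = c + (u : ZMod n) :=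
    ⟨(j - c).val, ZMod.val_lt _, by rw [ZMod.natCast_val, ZMod.cast_id', id, add_sub_cancel]⟩
  by_cases hum : u ≤ m
  · simpa only [subPolygon_natCast V c hum] using hmax u
  have hCA := hmax 0
  have hCB := hmax m
  rw [subPolygon_zero] at hCA
  rw [subPolygon_natCast V c le_rfl] at hCB
  have hCW := (hc'.dist_natCast_subPolygon ht0 htm).2.1
  exact le_dist_of_delaunay_diagonal (hconv.det2_pos_apex c ht0 htm hmn)
    (hconv.det2_pos_s17 c htm (not_le.1 hum) hun) (hconv.det2_pos_apex c ht0 (by omega) hun)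
    (hconv.det2_pos_apex c (by omega) (not_le.1 hum) hun) hCW hCA hCB hdA hdB
    (hempty _) (hempty _)

lemma not_globMax_zero_and_last (hconv : ConvexCCW V) (hgen : GenericPoly V)
    (hc' : IsCircumData (subPolygon V c m) O' R') (hm : 3 ≤ m) (hmn : m < n) :
    ¬ (GlobMax (subPolygon V c m) O' R' 0 ∧ GlobMax (subPolygon V c m) O' R' m) := by
  rintro ⟨hmax₀, hmaxₘ⟩
  have hwrap : (m : ZMod (m + 1)) + 1 = 0 := by
    exact_mod_cast ZMod.natCast_self (m + 1)
  obtain ⟨h₀B, h₀A, h₀X⟩ := hc' 0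
  rw [zero_sub, neg_eq_of_add_eq_zero_left hwrap, subPolygon_natCast V c le_rfl] at h₀B
  rw [subPolygon_zero] at h₀A
  rw [zero_add, ← Nat.cast_one, subPolygon_natCast V c (by omega)] at h₀X
  obtain ⟨hₘW, hₘB, hₘA⟩ := hc' m
  rw [← Nat.cast_pred (by omega), subPolygon_natCast V c (by omega)] at hₘW
  rw [subPolygon_natCast V c le_rfl] at hₘB
  rw [hwrap, subPolygon_zero] at hₘA
  have h₀W := hmax₀ (m - 1 : ℕ)
  have hₘX := hmaxₘ (1 : ℕ)
  rw [subPolygon_natCast V c (by omega)] at h₀W hₘX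
  have hside : 0 < det2 (V c) (V (c + m)) (V (c + (m - 1 : ℕ))) *
      det2 (V c) (V (c + m)) (V (c + (1 : ℕ))) := by
    rw [det2_swap _ _ (V (c + (m - 1 : ℕ))), det2_swap _ _ (V (c + (1 : ℕ))), neg_mul_neg]
    exact mul_pos (hconv.det2_pos_apex c (by omega) (by omega) hmn)
      (hconv.det2_pos_apex c one_pos (by omega) hmn)
  have hW := dist_eq_of_same_side_of_le_dist hside h₀A h₀B h₀X h₀W hₘA hₘB hₘW hₘX
  have hne : ∀ {i j : ℕ}, i < n → j < n → i ≠ j → c + (i : ZMod n) ≠ c + j :=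
    fun hi hj hij => (add_natCast_eq_add_natCast_iff c hi hj).not.2 hij
  refine hgen.2 (c + (0 : ℕ)) (c + m) (c + (1 : ℕ)) (c + (m - 1 : ℕ))
    (hne (by omega) hmn (by omega)) (hne (by omega) (by omega) (by omega))
    (hne (by omega) (by omega) (by omega)) (hne hmn (by omega) (by omega))
    (hne hmn (by omega) (by omega)) (hne (by omega) (by omega) (by omega)) ⟨O' 0, R' 0, ?_⟩
  rw [Nat.cast_zero, add_zero]
  exact ⟨h₀A, h₀B, h₀X, hW⟩

lemma ncard_globMax_subPolygon_le (hconv : ConvexCCW V) (hgen : GenericPoly V)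
    (hcirc : IsCircumData V O R) (hc' : IsCircumData (subPolygon V c m) O' R') (hm : 3 ≤ m)
    (hmn : m < n) {Od : Pt} {Rd : ℝ} (hdA : dist (V c) Od = Rd)
    (hdB : dist (V (c + m)) Od = Rd) (hempty : ∀ j : ZMod n, Rd ≤ dist (V j) Od) :
    {k | GlobMax (subPolygon V c m) O' R' k}.ncard ≤
      ({i | GlobMax V O R i} ∩ openArc c m).ncard + 1 := by
  set S' := {k | GlobMax (subPolygon V c m) O' R' k}
  set interior := S' \ {0, (m : ZMod (m + 1))}
  have hval : ∀ k ∈ interior, 0 < k.val ∧ k.val < m := by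
    rintro k ⟨-, hk⟩
    simp only [Set.mem_insert_iff, Set.mem_singleton_iff, not_or] at hk
    refine ⟨ZMod.val_pos.2 hk.1, lt_of_le_of_ne (Nat.lt_succ_iff.1 k.val_lt) fun h => hk.2 ?_⟩
    rw [← ZMod.natCast_zmod_val k, h]
  set lift := fun k : ZMod (m + 1) => c + (k.val : ZMod n)
  have hinj : Set.InjOn lift interior := by
    intro k hk l hl hkl
    have := hval k hk
    have := hval l hl
    exact ZMod.val_injective _ ((add_natCast_eq_add_natCast_iff c (by omega) (by omega)).1 hkl)
  have hlift : lift '' interior ⊆ {i | GlobMax V O R i} ∩ openArc c m := by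
    rintro _ ⟨k, hk, rfl⟩
    obtain ⟨hk0, hkm⟩ := hval k hk
    have hmax : GlobMax (subPolygon V c m) O' R' (k.val : ℕ) := by
      rw [ZMod.natCast_zmod_val]
      exact hk.1
    exact ⟨hmax.of_subPolygon hconv hcirc hc' hmn hdA hdB hempty hk0 hkm,
      k.val, ⟨hk0, hkm⟩, rfl⟩
  calc S'.ncard ≤ interior.ncard + 1 :=
        Set.ncard_le_ncard_sdiff_pair_add_one (not_globMax_zero_and_last hconv hgen hc' hm hmn)
    _ = (lift '' interior).ncard + 1 := by rw [hinj.ncard_image]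
    _ ≤ ({i | GlobMax V O R i} ∩ openArc c m).ncard + 1 := by
        gcongr
        exact Set.toFinite _

end SubPolygon

theorem decomposition_delaunay_global_max_general
    (n : ℕ) [NeZero n]
    (V O : ZMod n → Pt) (R : ZMod n → ℝ)
    (hconv : ConvexCCW V) (hgen : GenericPoly V) (hcirc : IsCircumData V O R)
    (a : ZMod n) (m : ℕ) (hm3 : 3 ≤ m) (hmn : m ≤ n - 3)
    (hdel : ∃ (Oc : Pt) (Rc : ℝ), dist (V a) Oc = Rc ∧
      dist (V (a + (m : ZMod n))) Oc = Rc ∧ ∀ j : ZMod n, Rc ≤ dist (V j) Oc)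
    (O1 : ZMod (m + 1) → Pt) (R1 : ZMod (m + 1) → ℝ)
    (hc1 : IsCircumData (subPolygon V a m) O1 R1)
    (O2 : ZMod (n - m + 1) → Pt) (R2 : ZMod (n - m + 1) → ℝ)
    (hc2 : IsCircumData (subPolygon V (a + (m : ZMod n)) (n - m)) O2 R2) :
    {k : ZMod (m + 1) | GlobMax (subPolygon V a m) O1 R1 k}.ncard +
      {k : ZMod (n - m + 1) |
        GlobMax (subPolygon V (a + (m : ZMod n)) (n - m)) O2 R2 k}.ncard ≤
    {k : ZMod n | GlobMax V O R k}.ncard + 2 := by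
  obtain ⟨Od, Rd, hdA, hdB, hempty⟩ := hdel
  have hwrap : a + (m : ZMod n) + ((n - m : ℕ) : ZMod n) = a := by
    rw [add_assoc, ← Nat.cast_add, Nat.add_sub_cancel' (by omega), ZMod.natCast_self, add_zero]
  have h₁ := ncard_globMax_subPolygon_le hconv hgen hcirc hc1 hm3 (by omega) hdA hdB hempty
  have h₂ := ncard_globMax_subPolygon_le hconv hgen hcirc hc2 (by omega) (by omega) hdB
    (hwrap.symm ▸ hdA) hempty
  set S := {k : ZMod n | GlobMax V O R k}
  have hdisj : Disjoint (S ∩ openArc a m) (S ∩ openArc (a + m) (n - m)) :=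
    (disjoint_openArc a (by omega)).mono Set.inter_subset_right Set.inter_subset_right
  calc _ ≤ (S ∩ openArc a m).ncard + (S ∩ openArc (a + m) (n - m)).ncard + 2 := by omega
    _ = (S ∩ openArc a m ∪ S ∩ openArc (a + m) (n - m)).ncard + 2 := by
        rw [Set.ncard_union_eq hdisj]
    _ ≤ S.ncard + 2 := by
        gcongr
        · exact Set.toFinite _
        exact Set.union_subset Set.inter_subset_left Set.inter_subset_left

/-- Decomposing a generic convex polygon with `n ≥ 6` vertices along a Delaunay
diagonal (some circle through the endpoints `V a` and `V (a+m)` of the diagonal has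
no vertex of `P` in its open disk) satisfies `s₋(P) ≥ s₋(P₁) + s₋(P₂) - 2`. -/
theorem decomposition_delaunay_global_max
    (n : ℕ) [NeZero n] (hn : 6 ≤ n)
    (V O : ZMod n → Pt) (R : ZMod n → ℝ)
    (hconv : ConvexCCW V) (hgen : GenericPoly V) (hcirc : IsCircumData V O R)
    (a : ZMod n) (m : ℕ) (hm3 : 3 ≤ m) (hmn : m ≤ n - 3)
    (hdel : ∃ (Oc : Pt) (Rc : ℝ), dist (V a) Oc = Rc ∧
      dist (V (a + (m : ZMod n))) Oc = Rc ∧ ∀ j : ZMod n, Rc ≤ dist (V j) Oc)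
    (O1 : ZMod (m + 1) → Pt) (R1 : ZMod (m + 1) → ℝ)
    (hc1 : IsCircumData (subPolygon V a m) O1 R1)
    (O2 : ZMod (n - m + 1) → Pt) (R2 : ZMod (n - m + 1) → ℝ)
    (hc2 : IsCircumData (subPolygon V (a + (m : ZMod n)) (n - m)) O2 R2) :
    {k : ZMod (m + 1) | GlobMax (subPolygon V a m) O1 R1 k}.ncard +
      {k : ZMod (n - m + 1) |
        GlobMax (subPolygon V (a + (m : ZMod n)) (n - m)) O2 R2 k}.ncard ≤
    {k : ZMod n | GlobMax V O R k}.ncard + 2 :=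
  decomposition_delaunay_global_max_general n V O R hconv hgen hcirc a m hm3 hmn hdel O1 R1 hc1 O2
    R2 hc2
end
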